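/- Let m ≥ 2 and suppose 𝔼[X] = 0. Then the reduced univariate estimator c₄⁽ᶜ⁾ = ( (m+2)·\overline{X⁴} − 3m·(\overline{X²})² ) / (m−1) satisfies 𝔼[c₄⁽ᶜ⁾] = 𝔼[X⁴] − 3𝔼[X²]², which under the hypothesis 𝔼[X]=0 equals the fourth cumulant of X. -/

import Mathlib

open MeasureTheory ProbabilityTheory Finset

/-! Writing `S₂ = ∑ Xᵢ²` and `S₄ = ∑ Xᵢ⁴`, linearity gives `𝔼 S₄ = m μ₄`, and expanding the
square, with `𝔼[Xᵢ² Xⱼ²] = μ₂²` for `i ≠ j` by independence, gives `𝔼 S₂² = m μ₄ + m (m - 1) μ₂²`.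
The weights `m + 2` and `3m` are exactly those for which `μ₄` and `μ₂²` enter the expectation of
the estimator with the coefficients `m - 1` and `-3 (m - 1)`. The second identity is the moment
expansion of the fourth cumulant evaluated at `𝔼 X = 0`. -/

theorem MeasureTheory.MemLp.sq_memLp_two {α : Type*} [MeasurableSpace α] {μ : Measure α}
    {f : α → ℝ} (hf : MemLp f 4 μ) : MemLp (fun x => f x ^ 2) 2 μ := by
  refine (memLp_two_iff_integrable_sq (hf.1.pow 2)).2 ?_
  have h4 : Integrable (fun x => ‖f x‖ ^ 4) μ := hf.integrable_norm_pow (p := 4) (by norm_num)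
  simpa [Real.norm_eq_abs, ← pow_mul, Even.pow_abs ⟨2, rfl⟩] using h4

section

variable {Ω ι : Type*} [MeasurableSpace Ω] {μ : Measure Ω} [Fintype ι]

theorem integral_sum_of_integral_eq {Y : ι → Ω → ℝ} {a : ℝ} (hY : ∀ i, Integrable (Y i) μ)
    (ha : ∀ i, ∫ ω, Y i ω ∂μ = a) :
    ∫ ω, ∑ i, Y i ω ∂μ = Fintype.card ι * a := by
  simp [integral_finsetSum _ fun i _ => hY i, ha]

theorem integral_sum_sq_of_pairwise_indepFun {Y : ι → Ω → ℝ} {a b : ℝ}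
    (hY : ∀ i, MemLp (Y i) 2 μ) (hindep : Pairwise fun i j => IndepFun (Y i) (Y j) μ)
    (ha : ∀ i, ∫ ω, Y i ω ∂μ = a) (hb : ∀ i, ∫ ω, Y i ω ^ 2 ∂μ = b) :
    ∫ ω, (∑ i, Y i ω) ^ 2 ∂μ
      = Fintype.card ι * b + Fintype.card ι * (Fintype.card ι - 1) * a ^ 2 := by
  classical
  have hint : ∀ i j, Integrable (fun ω => Y i ω * Y j ω) μ :=
    fun i j => (hY i).integrable_mul (hY j)
  have hcross : ∀ i j, ∫ ω, Y i ω * Y j ω ∂μ = a ^ 2 + if i = j then b - a ^ 2 else 0 := by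
    intro i j
    rcases eq_or_ne i j with rfl | hij
    · simp [← sq, hb]
    · rw [(hindep hij).integral_fun_mul_eq_mul_integral (hY i).1 (hY j).1, ha, ha, if_neg hij]
      ring
  simp_rw [sq (∑ i, Y _ _), sum_mul_sum]
  rw [integral_finsetSum _ fun i _ => integrable_finsetSum _ fun j _ => hint i j]
  simp_rw [integral_finsetSum _ fun j _ => hint _ j, hcross, sum_add_distrib, sum_ite_eq,
    mem_univ, if_true, sum_const, card_univ, nsmul_eq_mul]
  ring

end

theorem unbiased_c4_c_uni {Ω : Type*} [MeasurableSpace Ω] (μ : Measure Ω) [IsProbabilityMeasure μ]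
    (m : ℕ) (hm : 2 ≤ m)
    (X : Fin m → Ω → ℝ)
    (hindep : iIndepFun X μ)
    (hident : ∀ i, IdentDistrib (X i) (X ⟨0, by omega⟩) μ μ)
    (hX : MemLp (X ⟨0, by omega⟩) 4 μ)
    (hEX : (∫ ω, X ⟨0, by omega⟩ ω ∂μ) = 0) :
    (∫ ω, (((m:ℝ)+2) * ((m:ℝ)⁻¹ * ∑ i, (X i ω)^4) - 3 * (m:ℝ) * ((m:ℝ)⁻¹ * ∑ i, (X i ω)^2)^2) / ((m:ℝ)-1) ∂μ) = (∫ ω, X ⟨0, by omega⟩ ω^4 ∂μ) - 3 * (∫ ω, X ⟨0, by omega⟩ ω^2 ∂μ)^2 ∧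
    (∫ ω, X ⟨0, by omega⟩ ω^4 ∂μ) - 3 * (∫ ω, X ⟨0, by omega⟩ ω^2 ∂μ)^2 = (∫ ω, X ⟨0, by omega⟩ ω^4 ∂μ) - 4 * (∫ ω, X ⟨0, by omega⟩ ω^3 ∂μ) * (∫ ω, X ⟨0, by omega⟩ ω ∂μ) - 3 * (∫ ω, X ⟨0, by omega⟩ ω^2 ∂μ)^2 + 12 * (∫ ω, X ⟨0, by omega⟩ ω^2 ∂μ) * (∫ ω, X ⟨0, by omega⟩ ω ∂μ)^2 - 6 * (∫ ω, X ⟨0, by omega⟩ ω ∂μ)^4 := by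
  refine ⟨?_, by rw [hEX]; ring⟩
  have hm0 : (m : ℝ) ≠ 0 := by positivity
  have hm1 : (m : ℝ) - 1 ≠ 0 := sub_ne_zero.2 (by exact_mod_cast (by omega : m ≠ 1))
  have hX4 : ∀ i, MemLp (X i) 4 μ := fun i => (hident i).symm.memLp_snd hX
  have hX2 : ∀ i, MemLp (fun ω => X i ω ^ 2) 2 μ := fun i => (hX4 i).sq_memLp_two
  have hmom : ∀ i (k : ℕ), ∫ ω, X i ω ^ k ∂μ = ∫ ω, X ⟨0, by omega⟩ ω ^ k ∂μ :=
    fun i k => ((hident i).comp (measurable_id.pow_const k)).integral_eq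
  have hpow4 : ∀ i, Integrable (fun ω => X i ω ^ 4) μ := fun i => by
    simpa [← pow_mul] using (hX2 i).integrable_sq
  have hS4 : ∫ ω, ∑ i, X i ω ^ 4 ∂μ = m * ∫ ω, X ⟨0, by omega⟩ ω ^ 4 ∂μ := by
    simpa using integral_sum_of_integral_eq hpow4 fun i => hmom i 4
  have hS2 : ∫ ω, (∑ i, X i ω ^ 2) ^ 2 ∂μ = m * ∫ ω, X ⟨0, by omega⟩ ω ^ 4 ∂μ
      + m * (m - 1) * (∫ ω, X ⟨0, by omega⟩ ω ^ 2 ∂μ) ^ 2 := by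
    simpa using integral_sum_sq_of_pairwise_indepFun hX2
      (fun i j hij => (hindep.indepFun hij).comp (measurable_id.pow_const 2)
        (measurable_id.pow_const 2))
      (fun i => hmom i 2) (fun i => by simp only [← pow_mul]; exact hmom i 4)
  have hestimator : ∀ ω, (((m:ℝ)+2) * ((m:ℝ)⁻¹ * ∑ i, (X i ω)^4)
      - 3 * (m:ℝ) * ((m:ℝ)⁻¹ * ∑ i, (X i ω)^2)^2) / ((m:ℝ)-1)
      = (m + 2) / (m * (m - 1)) * ∑ i, X i ω ^ 4 - 3 / (m * (m - 1)) * (∑ i, X i ω ^ 2) ^ 2 := by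
    intro ω
    field_simp
  rw [integral_congr_ae (ae_of_all _ hestimator),
    integral_sub ((integrable_finsetSum _ fun i _ => hpow4 i).const_mul _)
      ((memLp_finsetSum _ fun i _ => hX2 i).integrable_sq.const_mul _),
    integral_const_mul, integral_const_mul, hS4, hS2]
  field_simp
  ring
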